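/- Let A₁ ∈ ℝ^{m×m} and A₂ ∈ ℝ^{n×n} be symmetric, and H₁ ∈ ℝ^{m×m}, H₂ ∈ ℝ^{n×n} be symmetric positive definite diagonal. If H₁A₁ + (H₁A₁)ᵀ ⪯ 0 and H₂A₂ + (H₂A₂)ᵀ ⪯ 0, then for the Kronecker-product operator L = A₁ ⊗ I_n + I_m ⊗ A₂ and H = H₁ ⊗ H₂, we have HL + (HL)ᵀ ⪯ 0. -/

import Mathlib

/-!
With `H = H₁ ⊗ H₂` and `L = A₁ ⊗ I + I ⊗ A₂`, the mixed-product rule gives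
`H L = (H₁ A₁) ⊗ H₂ + H₁ ⊗ (H₂ A₂)`, and since `H₁`, `H₂` are symmetric,
`H L + (H L)ᵀ = (H₁ A₁ + (H₁ A₁)ᵀ) ⊗ H₂ + H₁ ⊗ (H₂ A₂ + (H₂ A₂)ᵀ)`.
Each summand is a Kronecker product of a negative semidefinite and a positive semidefinite
matrix, hence negative semidefinite.
-/

open Matrix Kronecker

namespace Matrix

theorem neg_kronecker {α l m n p : Type*} [Mul α] [HasDistribNeg α] (A : Matrix l m α)
    (B : Matrix n p α) : (-A) ⊗ₖ B = -(A ⊗ₖ B) := by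
  ext
  simp [neg_mul]

theorem kronecker_neg {α l m n p : Type*} [Mul α] [HasDistribNeg α] (A : Matrix l m α)
    (B : Matrix n p α) : A ⊗ₖ (-B) = -(A ⊗ₖ B) := by
  ext
  simp [mul_neg]

variable {α : Type*} [CommRing α] {l n : Type*} [Fintype l] [Fintype n] [DecidableEq l]
  [DecidableEq n]

theorem kronecker_mul_kroneckerSum (H₁ A₁ : Matrix l l α) (H₂ A₂ : Matrix n n α) :
    (H₁ ⊗ₖ H₂) * (A₁ ⊗ₖ (1 : Matrix n n α) + (1 : Matrix l l α) ⊗ₖ A₂) =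
      (H₁ * A₁) ⊗ₖ H₂ + H₁ ⊗ₖ (H₂ * A₂) := by
  rw [Matrix.mul_add, ← mul_kronecker_mul, ← mul_kronecker_mul, Matrix.mul_one, Matrix.mul_one]

theorem kronecker_mul_kroneckerSum_add_transpose {H₁ : Matrix l l α} {H₂ : Matrix n n α}
    (hH₁ : H₁.IsSymm) (hH₂ : H₂.IsSymm) (A₁ : Matrix l l α) (A₂ : Matrix n n α) :
    (H₁ ⊗ₖ H₂) * (A₁ ⊗ₖ (1 : Matrix n n α) + (1 : Matrix l l α) ⊗ₖ A₂) +
        ((H₁ ⊗ₖ H₂) * (A₁ ⊗ₖ (1 : Matrix n n α) + (1 : Matrix l l α) ⊗ₖ A₂))ᵀ =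
      (H₁ * A₁ + (H₁ * A₁)ᵀ) ⊗ₖ H₂ + H₁ ⊗ₖ (H₂ * A₂ + (H₂ * A₂)ᵀ) := by
  rw [kronecker_mul_kroneckerSum, transpose_add, ← kroneckerMap_transpose,
    ← kroneckerMap_transpose, hH₁.eq, hH₂.eq, add_kronecker, kronecker_add]
  abel

theorem PosSemidef.neg_kronecker_mul_kroneckerSum_add_transpose {H₁ A₁ : Matrix l l ℝ}
    {H₂ A₂ : Matrix n n ℝ} (hH₁ : H₁.PosSemidef) (hH₂ : H₂.PosSemidef)
    (h₁ : (-(H₁ * A₁ + (H₁ * A₁)ᵀ)).PosSemidef)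
    (h₂ : (-(H₂ * A₂ + (H₂ * A₂)ᵀ)).PosSemidef) :
    (-((H₁ ⊗ₖ H₂) * (A₁ ⊗ₖ (1 : Matrix n n ℝ) + (1 : Matrix l l ℝ) ⊗ₖ A₂) +
        ((H₁ ⊗ₖ H₂) * (A₁ ⊗ₖ (1 : Matrix n n ℝ) + (1 : Matrix l l ℝ) ⊗ₖ A₂))ᵀ)).PosSemidef := by
  rw [kronecker_mul_kroneckerSum_add_transpose (isHermitian_iff_isSymm.mp hH₁.isHermitian)
    (isHermitian_iff_isSymm.mp hH₂.isHermitian), neg_add, ← neg_kronecker, ← kronecker_neg]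
  exact (h₁.kronecker hH₂).add (hH₁.kronecker h₂)

end Matrix

theorem stmt_19_general (m n : ℕ)
    (A₁ H₁ : Matrix (Fin m) (Fin m) ℝ) (A₂ H₂ : Matrix (Fin n) (Fin n) ℝ)
    (hH₁pd : H₁.PosDef)
    (hH₂pd : H₂.PosDef)
    (h₁ : (-(H₁ * A₁ + (H₁ * A₁)ᵀ)).PosSemidef)
    (h₂ : (-(H₂ * A₂ + (H₂ * A₂)ᵀ)).PosSemidef)
    (L H : Matrix (Fin m × Fin n) (Fin m × Fin n) ℝ)
    (hL : L = A₁ ⊗ₖ (1 : Matrix (Fin n) (Fin n) ℝ) +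
      (1 : Matrix (Fin m) (Fin m) ℝ) ⊗ₖ A₂)
    (hH : H = H₁ ⊗ₖ H₂) :
    (-(H * L + (H * L)ᵀ)).PosSemidef := by
  subst hL hH
  exact .neg_kronecker_mul_kroneckerSum_add_transpose hH₁pd.posSemidef hH₂pd.posSemidef h₁ h₂

theorem stmt_19 (m n : ℕ)
    (A₁ H₁ : Matrix (Fin m) (Fin m) ℝ) (A₂ H₂ : Matrix (Fin n) (Fin n) ℝ)
    (hA₁ : A₁.IsSymm) (hA₂ : A₂.IsSymm)
    (hH₁sym : H₁.IsSymm) (hH₁pd : H₁.PosDef) (hH₁d : H₁.IsDiag)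
    (hH₂sym : H₂.IsSymm) (hH₂pd : H₂.PosDef) (hH₂d : H₂.IsDiag)
    (h₁ : (-(H₁ * A₁ + (H₁ * A₁)ᵀ)).PosSemidef)
    (h₂ : (-(H₂ * A₂ + (H₂ * A₂)ᵀ)).PosSemidef)
    (L H : Matrix (Fin m × Fin n) (Fin m × Fin n) ℝ)
    (hL : L = A₁ ⊗ₖ (1 : Matrix (Fin n) (Fin n) ℝ) +
      (1 : Matrix (Fin m) (Fin m) ℝ) ⊗ₖ A₂)
    (hH : H = H₁ ⊗ₖ H₂) :
    (-(H * L + (H * L)ᵀ)).PosSemidef :=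
  stmt_19_general m n A₁ H₁ A₂ H₂ hH₁pd hH₂pd h₁ h₂ L H hL hH
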